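/- arXiv:2410.20137 — 3 statements merged into one kernel-verified Lean document; each statement's English description precedes it below -/
import Mathlib

section
/- Every 2-edge-connected finite simple graph G admits a strongly connected orientation D of its edges such that every vertex v satisfies indeg_D(v) ≤ outdeg_D(v) + 1 if deg_G(v) is odd, and indeg_D(v) ≤ outdeg_D(v) if deg_G(v) is even. -/
/-- A finite simple graph is 2-edge-connected if it has at least 2 vertices,
is connected, and deleting any single edge leaves it connected. -/
def TwoEdgeConnected {V : Type*} [Fintype V] (G : SimpleGraph V) : Prop :=
  2 ≤ Fintype.card V ∧ G.Connected ∧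
    ∀ e ∈ G.edgeSet, (G.deleteEdges {e}).Connected

/-- `D` is an orientation of the graph `G`: each edge `{u, v}` of `G` gets
exactly one of the two directions `(u, v)` or `(v, u)`, and `D` holds only
on edges of `G`. -/
def IsOrientation {V : Type*} (G : SimpleGraph V) (D : V → V → Prop) : Prop :=
  (∀ u v, D u v → G.Adj u v) ∧ ∀ u v, G.Adj u v → (D u v ↔ ¬ D v u)

/-- The in-degree of `v` in the orientation `D`. -/
noncomputable def inDeg {V : Type*} (D : V → V → Prop) (v : V) : ℕ :=
  {u | D u v}.ncard

/-- The out-degree of `v` in the orientation `D`. -/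
noncomputable def outDeg {V : Type*} (D : V → V → Prop) (v : V) : ℕ :=
  {u | D v u}.ncard


set_option linter.unusedSectionVars false
set_option maxHeartbeats 800000

open Finset List

namespace BalOrient

variable {V : Type*} [Fintype V]

noncomputable section
open Classical

/-- excess contribution of one oriented pair at `z`. -/
def hexc (p : V × V) (z : V) : ℤ :=
  (if p.2 = z then 1 else 0) - (if p.1 = z then 1 else 0)

def hdeg (p : V × V) (z : V) : ℤ :=
  (if p.2 = z then 1 else 0) + (if p.1 = z then 1 else 0)

def Exc {n : ℕ} (q : Fin n → V × V) (z : V) : ℤ := ∑ i, hexc (q i) z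

def Deg {n : ℕ} (q : Fin n → V × V) (z : V) : ℤ := ∑ i, hdeg (q i) z

lemma hexc_swap (p : V × V) (z : V) : hexc p.swap z = - hexc p z := by
  simp only [hexc, Prod.snd_swap, Prod.fst_swap]; ring

lemma hdeg_swap (p : V × V) (z : V) : hdeg p.swap z = hdeg p z := by
  simp only [hdeg, Prod.snd_swap, Prod.fst_swap]; ring

lemma even_deg_sub_exc {n : ℕ} (q : Fin n → V × V) (z : V) :
    Even (Deg q z - Exc q z) := by
  have : Deg q z - Exc q z = ∑ i, 2 * (if (q i).1 = z then 1 else 0) := by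
    rw [Deg, Exc, ← Finset.sum_sub_distrib]
    refine Finset.sum_congr rfl fun i _ => ?_
    simp only [hdeg, hexc]; ring
  rw [this, ← Finset.mul_sum]
  exact even_two_mul _

section chains

variable {α : Type*} {r : α → α → Prop}

/-- dedup a chain, keeping endpoints. -/
lemma exists_nodup_chain_aux :
    ∀ (n : ℕ) (l : List α), l.length ≤ n → ∀ a, Chain r a l →
      ∃ l' : List α, Chain r a l' ∧
        (a :: l').getLast (cons_ne_nil _ _) = (a :: l).getLast (cons_ne_nil _ _) ∧
        (a :: l').Nodup ∧ (∀ x ∈ l', x ∈ l) := by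
  intro n
  induction n with
  | zero =>
    intro l hl a _
    rw [List.length_eq_zero_iff.mp (Nat.le_zero.mp hl)]
    exact ⟨[], List.Chain.nil, rfl, List.nodup_singleton a, by simp⟩
  | succ n ih =>
    intro l hl a hchain
    by_cases hal : a ∈ l
    · -- cut at the last occurrence of a
      obtain ⟨t, u, rfl⟩ := List.append_of_mem hal
      have hc : Chain r a u := (List.isChain_cons_split.mp hchain).2
      have hlen : u.length ≤ n := by
        have := hl; simp only [List.length_append, List.length_cons] at this; omega
      obtain ⟨l', h1, h2, h3, h4⟩ := ih u hlen a hc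
      refine ⟨l', h1, ?_, h3, fun x hx => by simp [h4 x hx]⟩
      rw [h2]
      have h5 : (a :: (t ++ a :: u)).getLast? = (a :: u).getLast? := by
        rw [show a :: (t ++ a :: u) = (a :: t) ++ (a :: u) from by simp,
          List.getLast?_append_of_ne_nil _ (cons_ne_nil _ _)]
      rw [List.getLast?_eq_getLast (cons_ne_nil _ _),
        List.getLast?_eq_getLast (cons_ne_nil _ _), Option.some_inj] at h5
      exact h5.symm
    · cases l with
      | nil => exact ⟨[], List.Chain.nil, rfl, List.nodup_singleton a, by simp⟩
      | cons b t =>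
        have hab : r a b := (List.chain_cons.mp hchain).1
        have hbt : Chain r b t := (List.chain_cons.mp hchain).2
        have hlen : t.length ≤ n := by
          simp only [List.length_cons] at hl; omega
        obtain ⟨t', h1, h2, h3, h4⟩ := ih t hlen b hbt
        have hat' : a ∉ b :: t' := by
          intro hmem
          rcases List.mem_cons.mp hmem with h | h
          · exact hal (h ▸ List.mem_cons_self)
          · exact hal (List.mem_cons_of_mem _ (h4 a h))
        refine ⟨b :: t', List.chain_cons.mpr ⟨hab, h1⟩, ?_, ?_, ?_⟩
        · rw [List.getLast_cons (cons_ne_nil _ _), List.getLast_cons (cons_ne_nil _ _)]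
          exact h2
        · exact List.nodup_cons.mpr ⟨hat', h3⟩
        · intro x hx
          rcases List.mem_cons.mp hx with h | h
          · simp [h]
          · exact List.mem_cons_of_mem _ (h4 x h)

lemma exists_nodup_chain (l : List α) (a : α) (h : Chain r a l) :
    ∃ l' : List α, Chain r a l' ∧
      (a :: l').getLast (cons_ne_nil _ _) = (a :: l).getLast (cons_ne_nil _ _) ∧
      (a :: l').Nodup :=
  let ⟨l', h1, h2, h3, _⟩ := exists_nodup_chain_aux l.length l le_rfl a h
  ⟨l', h1, h2, h3⟩

/-- consecutive pairs of a chain satisfy the relation -/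
lemma chain_zip_mem : ∀ (l : List α) (a : α), Chain r a l →
    ∀ pr ∈ (a :: l).zip l, r pr.1 pr.2 := by
  intro l
  induction l with
  | nil => intro a _ pr hpr; simp at hpr
  | cons b t ih =>
    intro a hchain pr hpr
    rcases List.chain_cons.mp hchain with ⟨hab, hbt⟩
    rcases List.mem_cons.mp hpr with h | h
    · rw [h]; exact hab
    · exact ih b hbt pr h

lemma nodup_zip_tail : ∀ (l : List α) (a : α), (a :: l).Nodup → ((a :: l).zip l).Nodup := by
  intro l
  induction l with
  | nil => intro a _; simp
  | cons b t ih =>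
    intro a hnd
    have h1 : (b :: t).Nodup := (List.nodup_cons.mp hnd).2
    refine List.nodup_cons.mpr ⟨?_, ih b h1⟩
    intro hmem
    have := (List.of_mem_zip hmem).1
    exact (List.nodup_cons.mp hnd).1 this

/-- telescoping sum over consecutive pairs -/
lemma zip_telescope (g : α → ℤ) : ∀ (l : List α) (a : α),
    (((a :: l).zip l).map (fun pr => g pr.2 - g pr.1)).sum
      = g ((a :: l).getLast (cons_ne_nil _ _)) - g a := by
  intro l
  induction l with
  | nil => simp
  | cons b t ih =>
    intro a
    have : (a :: b :: t).zip (b :: t) = (a, b) :: ((b :: t).zip t) := rfl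
    rw [this, List.map_cons, List.sum_cons, ih b, List.getLast_cons (cons_ne_nil _ _)]
    ring

end chains

lemma deg_invariant {n : ℕ} (p q : Fin n → V × V)
    (h : ∀ i, q i = p i ∨ q i = (p i).swap) (z : V) : Deg q z = Deg p z := by
  refine Finset.sum_congr rfl fun i _ => ?_
  rcases h i with h' | h' <;> rw [h']
  exact hdeg_swap _ _

/-- Main lemma: any family of pairs admits an orientation (elementwise optional swap)
whose excess is at most 1 everywhere, and at most 0 at even-degree vertices. -/
theorem exists_balanced_orientation {n : ℕ} (p : Fin n → V × V) :
    ∃ q : Fin n → V × V, (∀ i, q i = p i ∨ q i = (p i).swap) ∧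
      ∀ z, Exc q z ≤ 1 ∧ (Even (Deg p z) → Exc q z ≤ 0) := by
  classical
  set Φ : (Fin n → V × V) → ℤ := fun q => ∑ z, (Exc q z) ^ 2 with hΦ
  set S : Finset (Fin n → V × V) :=
    Finset.univ.filter (fun q => ∀ i, q i = p i ∨ q i = (p i).swap) with hS
  have hpS : p ∈ S := by simp [hS]
  obtain ⟨q, hqS, hmin⟩ := S.exists_min_image Φ ⟨p, hpS⟩
  have hq : ∀ i, q i = p i ∨ q i = (p i).swap := by
    simpa [hS] using hqS
  -- key claim: no vertex has excess ≥ 2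
  have key : ∀ z₀, ¬ (2 ≤ Exc q z₀) := by
    intro z₀ hz₀
    set rel : V → V → Prop := fun a b => ∃ i, q i = (a, b) with hrel
    set R : Finset V := Finset.univ.filter (fun v => Relation.ReflTransGen rel v z₀) with hR
    have hmemR : ∀ v, v ∈ R ↔ Relation.ReflTransGen rel v z₀ := by
      intro v; simp [hR]
    have hz₀R : z₀ ∈ R := (hmemR z₀).mpr Relation.ReflTransGen.refl
    -- sum of excess over R is ≤ 0
    have hsum : ∑ v ∈ R, Exc q v ≤ 0 := by
      have h1 : ∑ v ∈ R, Exc q v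
          = ∑ i : Fin n, ∑ v ∈ R, hexc (q i) v := by
        rw [Finset.sum_comm]; rfl
      rw [h1]
      have hterm : ∀ i : Fin n, ∑ v ∈ R, hexc (q i) v ≤ (0:ℤ) := ?_
      · exact le_of_le_of_eq (Finset.sum_le_sum fun i _ => hterm i) Finset.sum_const_zero
      intro i
      have h2 : ∑ v ∈ R, hexc (q i) v
          = (if (q i).2 ∈ R then (1:ℤ) else 0) - (if (q i).1 ∈ R then 1 else 0) := by
        unfold hexc
        rw [Finset.sum_sub_distrib, Finset.sum_ite_eq R (q i).2 (fun _ => (1:ℤ)),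
          Finset.sum_ite_eq R (q i).1 (fun _ => (1:ℤ))]
      rw [h2]
      by_cases hsnd : (q i).2 ∈ R
      · have hfst : (q i).1 ∈ R := by
          rw [hmemR]
          exact Relation.ReflTransGen.head ⟨i, rfl⟩ ((hmemR _).mp hsnd)
        simp [hsnd, hfst]
      · simp only [if_neg hsnd]
        split <;> omega
    -- find a vertex of negative excess in R
    have hw : ∃ w ∈ R, Exc q w < 0 := by
      by_contra hcon
      push_neg at hcon
      have := Finset.single_le_sum (f := Exc q) (fun v hv => hcon v hv) hz₀R
      omega
    obtain ⟨w, hwR, hwneg⟩ := hw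
    have hwz : w ≠ z₀ := fun h => by rw [h] at hwneg; omega
    -- extract a nodup chain from w to z₀
    obtain ⟨l, hlchain, hllast⟩ :=
      List.exists_isChain_cons_of_relationReflTransGen ((hmemR w).mp hwR)
    obtain ⟨c, hchain, hlast, hnodup⟩ := exists_nodup_chain l w hlchain
    rw [hllast] at hlast
    -- the consecutive pairs
    set P : List (V × V) := (w :: c).zip c with hP
    have hPrel : ∀ pr ∈ P, rel pr.1 pr.2 := chain_zip_mem c w hchain
    have hPnodup : P.Nodup := nodup_zip_tail c w hnodup
    -- pick for each pair an index realizing it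
    have hPidx : ∀ pr : {x // x ∈ P}, ∃ i, q i = pr.val := fun pr => by
      obtain ⟨i, hi⟩ := hPrel pr.val pr.property
      exact ⟨i, by rw [hi]⟩
    choose idx hidx using hPidx
    set Sl : List (Fin n) := P.attach.map idx with hSl
    have hSlmem : ∀ i, i ∈ Sl → (q i ∈ P) := by
      intro i hi
      rw [hSl, List.mem_map] at hi
      obtain ⟨pr, _, rfl⟩ := hi
      rw [hidx]; exact pr.property
    have hSlnodup : Sl.Nodup := by
      refine List.Nodup.map_on ?_ (List.nodup_attach.mpr hPnodup)
      intro x _ y _ hxy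
      have : q (idx x) = q (idx y) := by rw [hxy]
      rw [hidx, hidx] at this
      exact Subtype.ext this
    set q' : Fin n → V × V := fun i => if i ∈ Sl then (q i).swap else q i with hq'
    have hq'S : q' ∈ S := by
      simp only [hS, Finset.mem_filter, Finset.mem_univ, true_and]
      intro i
      rw [hq']
      by_cases h : i ∈ Sl
      · simp only [if_pos h]
        rcases hq i with h' | h' <;> rw [h']
        · right; rfl
        · left; exact Prod.swap_swap _
      · simp only [if_neg h]; exact hq i
    -- excess of q'
    have hexc' : ∀ z, Exc q' z = Exc q z
        - 2 * ((if z₀ = z then (1:ℤ) else 0) - (if w = z then 1 else 0)) := by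
      intro z
      have h1 : Exc q' z = ∑ i : Fin n,
          (hexc (q i) z + if i ∈ Sl then (-2) * hexc (q i) z else 0) := by
        refine Finset.sum_congr rfl fun i _ => ?_
        rw [hq']
        by_cases h : i ∈ Sl
        · simp only [if_pos h, hexc_swap]; ring
        · simp only [if_neg h]; ring
      rw [h1, Finset.sum_add_distrib]
      have h2 : ∑ i : Fin n, (if i ∈ Sl then (-2) * hexc (q i) z else 0)
          = ∑ i ∈ Finset.univ.filter (· ∈ Sl), (-2) * hexc (q i) z := by
        rw [Finset.sum_filter]
      have h3 : Finset.univ.filter (· ∈ Sl) = Sl.toFinset := by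
        ext i; simp
      have h4 : ∑ i ∈ Sl.toFinset, (-2) * hexc (q i) z
          = (Sl.map (fun i => (-2) * hexc (q i) z)).sum := by
        rw [List.sum_toFinset _ hSlnodup]
      have h5 : (Sl.map (fun i => (-2) * hexc (q i) z)).sum
          = (P.map (fun pr => (-2) * hexc pr z)).sum := by
        conv_rhs => rw [← List.attach_map_subtype_val P]
        rw [hSl, List.map_map, List.map_map]
        refine congrArg List.sum (List.map_congr_left fun pr _ => ?_)
        simp only [Function.comp_apply, hidx]
      have h6 : (P.map (fun pr => (-2) * hexc pr z)).sum
          = (-2) * ((P.map (fun pr => (if pr.2 = z then (1:ℤ) else 0)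
              - (if pr.1 = z then 1 else 0))).sum) := by
        rw [← List.sum_map_mul_left]
        rfl
      have h7 : (P.map (fun pr => (if pr.2 = z then (1:ℤ) else 0)
              - (if pr.1 = z then 1 else 0))).sum
          = (if z₀ = z then (1:ℤ) else 0) - (if w = z then 1 else 0) := by
        have := zip_telescope (fun v => if v = z then (1:ℤ) else 0) c w
        rw [hlast] at this
        rw [hP]
        convert this using 2
      rw [h2, h3, h4, h5, h6, h7]
      unfold Exc
      ring
    -- Φ decreases
    have hΦlt : Φ q' < Φ q := by
      set E : V → ℤ := Exc q with hE
      set d : V → ℤ := fun z => - 2 * ((if z₀ = z then (1:ℤ) else 0)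
          - (if w = z then 1 else 0)) with hd
      have h8 : Φ q' - Φ q = ∑ z, ((E z + d z) ^ 2 - E z ^ 2) := by
        rw [hΦ, ← Finset.sum_sub_distrib]
        refine Finset.sum_congr rfl fun z _ => ?_
        rw [hexc' z]
        simp only [hE, hd]
        ring
      have h9 : ∑ z, ((E z + d z) ^ 2 - E z ^ 2)
          = ∑ z ∈ ({w, z₀} : Finset V), ((E z + d z) ^ 2 - E z ^ 2) := by
        symm
        refine Finset.sum_subset (Finset.subset_univ _) ?_
        intro z _ hz
        simp only [Finset.mem_insert, Finset.mem_singleton] at hz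
        push_neg at hz
        have e1 : (if z₀ = z then (1:ℤ) else 0) = 0 := if_neg (fun h => hz.2 h.symm)
        have e2 : (if w = z then (1:ℤ) else 0) = 0 := if_neg (fun h => hz.1 h.symm)
        have : d z = 0 := by simp only [hd, e1, e2]; ring
        rw [this]; ring
      rw [Finset.sum_pair hwz] at h9
      have hdw : d w = 2 := by
        have e1 : (if z₀ = w then (1:ℤ) else 0) = 0 := if_neg (fun h => hwz h.symm)
        have e2 : (if w = w then (1:ℤ) else 0) = 1 := if_pos rfl
        simp only [hd, e1, e2]; norm_num
      have hdz : d z₀ = -2 := by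
        have e1 : (if z₀ = z₀ then (1:ℤ) else 0) = 1 := if_pos rfl
        have e2 : (if w = z₀ then (1:ℤ) else 0) = 0 := if_neg hwz
        simp only [hd, e1, e2]; norm_num
      have hEw : E w ≤ -1 := by omega
      have hEz : 2 ≤ E z₀ := hz₀
      nlinarith [h8, h9]
    exact absurd (hmin q' hq'S) (by omega)
  refine ⟨q, hq, fun z => ?_⟩
  constructor
  · have := key z; omega
  · intro heven
    have h1 : Even (Deg q z) := by rwa [deg_invariant p q hq]
    have h2 : Even (Exc q z) := by
      have := even_deg_sub_exc q z
      rcases this with ⟨k, hk⟩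
      rcases h1 with ⟨m, hm⟩
      exact ⟨m - k, by omega⟩
    have h3 := key z
    rcases h2 with ⟨m, hm⟩
    omega

end
end BalOrient

namespace BalOrient

open SimpleGraph List

variable {V : Type*} (G : SimpleGraph V)

/-- An "ear": a walk bundled with its endpoints. -/
abbrev Ear := (u : V) × (v : V) × G.Walk u v

variable {G}

/-- reversed ear -/
def eflip (e : Ear G) : Ear G := ⟨e.2.1, e.1, e.2.2.reverse⟩

variable (G)

def vtxs (L : List (Ear G)) : Set V := {v | ∃ e ∈ L, v ∈ e.2.2.support}

def eset (L : List (Ear G)) : Set (Sym2 V) := {s | ∃ e ∈ L, s ∈ e.2.2.edges}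

def allDarts (L : List (Ear G)) : List G.Dart := L.flatMap (fun e => e.2.2.darts)

def DRel (L : List (Ear G)) : V → V → Prop :=
  fun a b => ∃ d ∈ allDarts G L, d.toProd = (a, b)

/-- valid ear decompositions -/
inductive Good : List (Ear G) → Prop
  | base (e : Ear G) (hc : e.1 = e.2.1) (ht : e.2.2.IsTrail) (hn : ¬ e.2.2.Nil) : Good [e]
  | cons (e : Ear G) (L : List (Ear G)) (hL : Good L) (ht : e.2.2.IsTrail)
      (hn : ¬ e.2.2.Nil) (hs : e.1 ∈ vtxs G L) (hf : e.2.1 ∈ vtxs G L)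
      (hd : ∀ s ∈ e.2.2.edges, s ∉ eset G L) : Good (e :: L)

variable {G}

lemma mem_vtxs_cons {e : Ear G} {L : List (Ear G)} {v : V} :
    v ∈ vtxs G (e :: L) ↔ v ∈ e.2.2.support ∨ v ∈ vtxs G L := by
  simp [vtxs]

lemma mem_eset_cons {e : Ear G} {L : List (Ear G)} {s : Sym2 V} :
    s ∈ eset G (e :: L) ↔ s ∈ e.2.2.edges ∨ s ∈ eset G L := by
  simp [eset]

lemma allDarts_cons (e : Ear G) (L : List (Ear G)) :
    allDarts G (e :: L) = e.2.2.darts ++ allDarts G L := by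
  simp [allDarts]

lemma walk_edges_eq {u v : V} (w : G.Walk u v) : w.edges = w.darts.map SimpleGraph.Dart.edge := rfl

lemma map_edge_allDarts (L : List (Ear G)) :
    (allDarts G L).map SimpleGraph.Dart.edge = L.flatMap (fun e => e.2.2.edges) := by
  induction L with
  | nil => simp [allDarts]
  | cons e L ih => simp [allDarts_cons, walk_edges_eq, ih]

lemma mem_eset_iff_mem_flatMap {L : List (Ear G)} {s : Sym2 V} :
    s ∈ eset G L ↔ s ∈ L.flatMap (fun e => e.2.2.edges) := by
  simp [eset, List.mem_flatMap]

lemma eset_subset_edgeSet (L : List (Ear G)) : eset G L ⊆ G.edgeSet := by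
  rintro s ⟨e, _, hs⟩
  exact e.2.2.edges_subset_edgeSet hs

lemma drel_mono {L L' : List (Ear G)} (h : ∀ e ∈ L, e ∈ L') {a b : V} :
    DRel G L a b → DRel G L' a b := by
  rintro ⟨d, hd, hab⟩
  refine ⟨d, ?_, hab⟩
  simp only [allDarts, List.mem_flatMap] at hd ⊢
  obtain ⟨e, he, hde⟩ := hd
  exact ⟨e, h e he, hde⟩

section reach

/-- from any support vertex one can reach the end of a walk along its darts -/
lemma reach_end {u v : V} (w : G.Walk u v) (Dr : V → V → Prop)
    (hD : ∀ d ∈ w.darts, Dr d.fst d.snd) :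
    ∀ x ∈ w.support, Relation.ReflTransGen Dr x v := by
  induction w with
  | nil => intro x hx; rw [Walk.mem_support_nil_iff.mp hx]
  | @cons u u' v h p ih =>
    intro x hx
    rw [Walk.support_cons, List.mem_cons] at hx
    have hstep : Dr u u' := by
      have := hD ⟨(u, u'), h⟩ (by rw [Walk.darts_cons]; exact List.mem_cons_self)
      exact this
    have hD' : ∀ d ∈ p.darts, Dr d.fst d.snd := fun d hd =>
      hD d (by rw [Walk.darts_cons]; exact List.mem_cons_of_mem _ hd)
    rcases hx with rfl | hx
    · exact Relation.ReflTransGen.head hstep (ih hD' u' p.start_mem_support)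
    · exact ih hD' x hx

lemma reach_from_start {u v : V} (w : G.Walk u v) (Dr : V → V → Prop)
    (hD : ∀ d ∈ w.darts, Dr d.fst d.snd) :
    ∀ x ∈ w.support, Relation.ReflTransGen Dr u x := by
  induction w with
  | nil => intro x hx; rw [Walk.mem_support_nil_iff.mp hx]
  | @cons u u' v h p ih =>
    intro x hx
    rw [Walk.support_cons, List.mem_cons] at hx
    have hstep : Dr u u' := by
      have := hD ⟨(u, u'), h⟩ (by rw [Walk.darts_cons]; exact List.mem_cons_self)
      exact this
    have hD' : ∀ d ∈ p.darts, Dr d.fst d.snd := fun d hd =>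
      hD d (by rw [Walk.darts_cons]; exact List.mem_cons_of_mem _ hd)
    rcases hx with rfl | hx
    · exact Relation.ReflTransGen.refl
    · exact Relation.ReflTransGen.head hstep (ih hD' x hx)

lemma darts_drel {e : Ear G} {L : List (Ear G)} (he : e ∈ L) :
    ∀ d ∈ e.2.2.darts, DRel G L d.fst d.snd := by
  intro d hd
  exact ⟨d, by simp only [allDarts, List.mem_flatMap]; exact ⟨e, he, hd⟩, rfl⟩

lemma good_strong {L : List (Ear G)} (h : Good G L) :
    ∀ a ∈ vtxs G L, ∀ b ∈ vtxs G L, Relation.ReflTransGen (DRel G L) a b := by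
  induction h with
  | base e hc ht hn =>
    intro a ha b hb
    have ha' : a ∈ e.2.2.support := by
      rcases ha with ⟨e', he', h'⟩
      rcases List.mem_singleton.mp he' with rfl
      exact h'
    have hb' : b ∈ e.2.2.support := by
      rcases hb with ⟨e', he', h'⟩
      rcases List.mem_singleton.mp he' with rfl
      exact h'
    have hD := darts_drel (L := [e]) (List.mem_singleton_self e)
    have h1 : Relation.ReflTransGen (DRel G [e]) a e.2.1 := reach_end _ _ hD a ha'
    have h2 : Relation.ReflTransGen (DRel G [e]) e.1 b := reach_from_start _ _ hD b hb'
    rw [hc] at h2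
    exact h1.trans h2
  | cons e L hL ht hn hs hf hd ih =>
    intro a ha b hb
    have hmono : ∀ x y : V, DRel G L x y → DRel G (e :: L) x y :=
      fun x y => drel_mono (fun e' he' => List.mem_cons_of_mem _ he')
    have ihm : ∀ x ∈ vtxs G L, ∀ y ∈ vtxs G L,
        Relation.ReflTransGen (DRel G (e :: L)) x y := by
      intro x hx y hy
      exact Relation.ReflTransGen.mono (fun a b h => hmono a b h) x y (ih x hx y hy)
    have hD := darts_drel (L := e :: L) List.mem_cons_self
    -- get from a to some vertex of vtxs L
    have step1 : ∃ c ∈ vtxs G L, Relation.ReflTransGen (DRel G (e :: L)) a c := by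
      rcases mem_vtxs_cons.mp ha with ha' | ha'
      · exact ⟨e.2.1, hf, reach_end _ _ hD a ha'⟩
      · exact ⟨a, ha', Relation.ReflTransGen.refl⟩
    obtain ⟨c, hc, hac⟩ := step1
    rcases mem_vtxs_cons.mp hb with hb' | hb'
    · exact hac.trans ((ihm c hc e.1 hs).trans (reach_from_start _ _ hD b hb'))
    · exact hac.trans (ihm c hc b hb')

end reach

lemma good_edges_nodup {L : List (Ear G)} (h : Good G L) :
    ((allDarts G L).map SimpleGraph.Dart.edge).Nodup := by
  rw [map_edge_allDarts]
  induction h with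
  | base e hc ht hn => simpa using ht.edges_nodup
  | cons e L hL ht hn hs hf hd ih =>
    rw [List.flatMap_cons]
    refine List.Nodup.append ht.edges_nodup ih ?_
    intro s hs' hs''
    exact hd s hs' (mem_eset_iff_mem_flatMap.mpr hs'')

lemma good_darts_nodup {L : List (Ear G)} (h : Good G L) : (allDarts G L).Nodup :=
  (good_edges_nodup h).of_map _

lemma good_dart_unique {L : List (Ear G)} (h : Good G L) {d d' : G.Dart}
    (hd : d ∈ allDarts G L) (hd' : d' ∈ allDarts G L)
    (he : d.edge = d'.edge) : d = d' :=
  List.inj_on_of_nodup_map (good_edges_nodup h) hd hd' he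

section existence

variable [Fintype V]

lemma good_vtxs_nonempty {L : List (Ear G)} (h : Good G L) : ∃ v, v ∈ vtxs G L := by
  induction h with
  | base e hc ht hn => exact ⟨e.1, e, List.mem_singleton_self e, e.2.2.start_mem_support⟩
  | cons e L hL ht hn hs hf hd ih =>
    obtain ⟨v, hv⟩ := ih
    exact ⟨v, mem_vtxs_cons.mpr (Or.inr hv)⟩

lemma fst_mem_vtxs_of_mem_eset {L : List (Ear G)} {a b : V}
    (h : s(a, b) ∈ eset G L) : a ∈ vtxs G L := by
  obtain ⟨e, he, hs⟩ := h
  exact ⟨e, he, e.2.2.fst_mem_support_of_mem_edges hs⟩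

/-- scan a walk starting in `vtxs L` for an uncovered edge incident to `vtxs L`. -/
lemma scan_walk {L : List (Ear G)} {a b : V} (w : G.Walk a b)
    (ha : a ∈ vtxs G L) :
    (∃ c d, G.Adj c d ∧ c ∈ vtxs G L ∧ s(c, d) ∉ eset G L) ∨ b ∈ vtxs G L := by
  induction w with
  | nil => exact Or.inr ha
  | @cons u u' v h p ih =>
    by_cases hcov : s(u, u') ∈ eset G L
    · have : u' ∈ vtxs G L := by
        rw [Sym2.eq_swap] at hcov
        exact fst_mem_vtxs_of_mem_eset hcov
      exact ih this
    · exact Or.inl ⟨u, u', h, ha, hcov⟩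

/-- truncate a walk at the first vertex belonging to `vtxs L`. -/
lemma truncate_walk {L : List (Ear G)} :
    ∀ {a b : V} (r : G.Walk a b), a ∉ vtxs G L → b ∈ vtxs G L →
      ∃ (t : V) (r' : G.Walk a t), t ∈ vtxs G L ∧
        (∀ s ∈ r'.edges, s ∈ r.edges) ∧ (∀ s ∈ r'.edges, s ∉ eset G L) ∧
        (r.IsTrail → r'.IsTrail) ∧ ¬ r'.Nil := by
  intro a b r
  induction r with
  | nil => intro ha hb; exact absurd hb ha
  | @cons u m v h p ih =>
    intro ha hb
    by_cases hm : m ∈ vtxs G L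
    · refine ⟨m, Walk.cons h Walk.nil, hm, ?_, ?_, ?_, Walk.not_nil_cons⟩
      · intro s hs
        simp only [Walk.edges_cons, Walk.edges_nil, List.mem_singleton] at hs
        rw [hs, Walk.edges_cons]
        exact List.mem_cons_self
      · intro s hs
        simp only [Walk.edges_cons, Walk.edges_nil, List.mem_singleton] at hs
        rw [hs]
        intro hcov
        exact ha (fst_mem_vtxs_of_mem_eset hcov)
      · intro _
        simp [Walk.isTrail_def]
    · obtain ⟨t, r'', ht, hsub, hunc, htr, hnil⟩ := ih hm hb
      refine ⟨t, Walk.cons h r'', ht, ?_, ?_, ?_, Walk.not_nil_cons⟩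
      · intro s hs
        rw [Walk.edges_cons, List.mem_cons] at hs ⊢
        rcases hs with hs | hs
        · exact Or.inl hs
        · exact Or.inr (hsub s hs)
      · intro s hs
        rw [Walk.edges_cons, List.mem_cons] at hs
        rcases hs with rfl | hs
        · intro hcov
          exact ha (fst_mem_vtxs_of_mem_eset hcov)
        · exact hunc s hs
      · intro htrail
        rw [Walk.isTrail_cons] at htrail ⊢
        exact ⟨htr htrail.1, fun hmem => htrail.2 (hsub _ hmem)⟩

variable (G)

def TwoEC : Prop :=
  2 ≤ Fintype.card V ∧ G.Connected ∧ ∀ e ∈ G.edgeSet, (G.deleteEdges {e}).Connected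

variable {G}

/-- take a trail from `b` to `a` in `G` avoiding the edge `s(a,b)` and prepend the edge -/
lemma exists_closing_trail (hG : TwoEC G) {a b : V} (hab : G.Adj a b) :
    ∃ (p : G.Walk b a), p.IsTrail ∧ s(a, b) ∉ p.edges := by
  classical
  have hconn := hG.2.2 s(a, b) (G.mem_edgeSet.mpr hab)
  obtain ⟨q⟩ := hconn.preconnected b a
  set qp := q.toPath with hqp
  have hedges : ∀ s ∈ (qp : (G.deleteEdges {s(a,b)}).Walk b a).edges, s ∈ G.edgeSet :=
    fun s hs => SimpleGraph.edgeSet_mono (SimpleGraph.deleteEdges_le _)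
      ((qp : (G.deleteEdges {s(a,b)}).Walk b a).edges_subset_edgeSet hs)
  refine ⟨(qp : (G.deleteEdges {s(a,b)}).Walk b a).transfer G hedges, ?_, ?_⟩
  · exact (qp.2.transfer hedges).isTrail
  · rw [Walk.edges_transfer]
    intro hmem
    have := (qp : (G.deleteEdges {s(a,b)}).Walk b a).edges_subset_edgeSet hmem
    rw [SimpleGraph.edgeSet_deleteEdges] at this
    exact this.2 rfl

lemma first_edge {x y : V} (w : G.Walk x y) (hxy : x ≠ y) : ∃ z, G.Adj x z := by
  cases w with
  | nil => exact absurd rfl hxy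
  | cons h p => exact ⟨_, h⟩

lemma exists_base (hG : TwoEC G) : ∃ L : List (Ear G), Good G L := by
  have hcard := hG.1
  obtain ⟨x, y, hxy⟩ := Fintype.exists_pair_of_one_lt_card (by omega : 1 < Fintype.card V)
  obtain ⟨w⟩ := hG.2.1.preconnected x y
  obtain ⟨z, hadj⟩ := first_edge w hxy
  obtain ⟨p, hptrail, hpavoid⟩ := exists_closing_trail hG hadj
  refine ⟨[⟨x, x, Walk.cons hadj p⟩], Good.base _ rfl ?_ Walk.not_nil_cons⟩
  exact (Walk.isTrail_cons _ _).mpr ⟨hptrail, hpavoid⟩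

lemma good_extend (hG : TwoEC G) {L : List (Ear G)} (hgood : Good G L)
    {s₀ : Sym2 V} (hs₀G : s₀ ∈ G.edgeSet) (hs₀ : s₀ ∉ eset G L) :
    ∃ e : Ear G, Good G (e :: L) ∧ ∃ s ∈ eset G (e :: L), s ∉ eset G L := by
  classical
  induction s₀ using Sym2.ind with
  | _ x y => ?_
  have hadj : G.Adj x y := G.mem_edgeSet.mp hs₀G
  have hC : ∃ c d, G.Adj c d ∧ c ∈ vtxs G L ∧ s(c, d) ∉ eset G L := by
    by_cases hx : x ∈ vtxs G L
    · exact ⟨x, y, hadj, hx, hs₀⟩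
    · by_cases hy : y ∈ vtxs G L
      · exact ⟨y, x, hadj.symm, hy, by rwa [Sym2.eq_swap] at hs₀⟩
      · obtain ⟨v₀, hv₀⟩ := good_vtxs_nonempty hgood
        obtain ⟨w⟩ := hG.2.1.preconnected v₀ x
        rcases scan_walk w hv₀ with h | h
        · exact h
        · exact absurd h hx
  obtain ⟨c, d, hcd, hcv, hcde⟩ := hC
  by_cases hdv : d ∈ vtxs G L
  · refine ⟨⟨c, d, Walk.cons hcd Walk.nil⟩, ?_, s(c, d), ?_, hcde⟩
    · refine Good.cons _ _ hgood ?_ Walk.not_nil_cons hcv hdv ?_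
      · simp [Walk.isTrail_def]
      · intro s hs
        simp only [Walk.edges_cons, Walk.edges_nil, List.mem_singleton] at hs
        rwa [hs]
    · refine mem_eset_cons.mpr (Or.inl ?_)
      simp
  · obtain ⟨p, hptrail, hpavoid⟩ := exists_closing_trail hG hcd
    obtain ⟨t, r', ht', hsub, hunc, htr, hnnil⟩ := truncate_walk p hdv hcv
    refine ⟨⟨c, t, Walk.cons hcd r'⟩, ?_, s(c, d), ?_, hcde⟩
    · refine Good.cons _ _ hgood ?_ Walk.not_nil_cons hcv ht' ?_
      · exact (Walk.isTrail_cons _ _).mpr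
          ⟨htr hptrail, fun hmem => hpavoid (hsub _ hmem)⟩
      · intro s hs
        rw [Walk.edges_cons, List.mem_cons] at hs
        rcases hs with rfl | hs
        · exact hcde
        · exact hunc s hs
    · refine mem_eset_cons.mpr (Or.inl ?_)
      rw [Walk.edges_cons]
      exact List.mem_cons_self

lemma exists_cover_aux (hG : TwoEC G) :
    ∀ (n : ℕ) (L : List (Ear G)), Good G L → (G.edgeSet \ eset G L).ncard ≤ n →
      ∃ L', Good G L' ∧ eset G L' = G.edgeSet := by
  intro n
  induction n with
  | zero =>
    intro L hgood hcard
    refine ⟨L, hgood, ?_⟩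
    have hempty : G.edgeSet \ eset G L = ∅ := by
      have := Set.ncard_eq_zero (Set.toFinite _) |>.mp (Nat.le_zero.mp hcard)
      exact this
    have hsub : G.edgeSet ⊆ eset G L := by
      intro s hs
      by_contra hmem
      exact absurd (Set.mem_diff_of_mem hs hmem) (by rw [hempty]; exact Set.notMem_empty s)
    exact Set.Subset.antisymm (eset_subset_edgeSet L) hsub
  | succ n ih =>
    intro L hgood hcard
    by_cases hdone : eset G L = G.edgeSet
    · exact ⟨L, hgood, hdone⟩
    · have hssub : eset G L ⊂ G.edgeSet := ssubset_of_subset_of_ne (eset_subset_edgeSet L) hdone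
      obtain ⟨s₀, hs₀G, hs₀⟩ := Set.exists_of_ssubset hssub
      obtain ⟨e, hgood', s', hs'new, hs'old⟩ := good_extend hG hgood hs₀G hs₀
      have hstrict : (G.edgeSet \ eset G (e :: L)).ncard < (G.edgeSet \ eset G L).ncard := by
        refine Set.ncard_lt_ncard ?_ (Set.toFinite _)
        constructor
        · intro x hx
          exact ⟨hx.1, fun hmem => hx.2 (mem_eset_cons.mpr (Or.inr hmem))⟩
        · intro hsub2
          have hmem : s' ∈ G.edgeSet \ eset G L :=
            ⟨eset_subset_edgeSet (e :: L) hs'new, hs'old⟩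
          exact (hsub2 hmem).2 hs'new
      exact ih (e :: L) hgood' (by omega)

lemma exists_cover (hG : TwoEC G) :
    ∃ L : List (Ear G), Good G L ∧ eset G L = G.edgeSet ∧ vtxs G L = Set.univ := by
  obtain ⟨L₀, hgood₀⟩ := exists_base hG
  obtain ⟨L, hgood, hcover⟩ :=
    exists_cover_aux hG (G.edgeSet \ eset G L₀).ncard L₀ hgood₀ le_rfl
  refine ⟨L, hgood, hcover, ?_⟩
  rw [Set.eq_univ_iff_forall]
  intro v
  have hcard := hG.1
  obtain ⟨w', hw'⟩ := Fintype.exists_ne_of_one_lt_card (by omega : 1 < Fintype.card V) v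
  obtain ⟨w⟩ := hG.2.1.preconnected v w'
  obtain ⟨z, hadj⟩ := first_edge w (Ne.symm hw')
  have : s(v, z) ∈ eset G L := by rw [hcover]; exact G.mem_edgeSet.mpr hadj
  exact fst_mem_vtxs_of_mem_eset this

end existence

end BalOrient

namespace BalOrient

open SimpleGraph List

variable {V : Type*} {G : SimpleGraph V}

/-! ### Reorientation of ear lists -/

def Reo : List (Ear G) → List (Ear G) → Prop :=
  List.Forall₂ (fun e e' => e' = e ∨ e' = eflip e)

lemma eflip_support (e : Ear G) : (eflip e).2.2.support = e.2.2.support.reverse :=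
  Walk.support_reverse _

lemma eflip_edges (e : Ear G) : (eflip e).2.2.edges = e.2.2.edges.reverse :=
  Walk.edges_reverse _

lemma reo_vtxs {L L' : List (Ear G)} (h : Reo L L') : vtxs G L' = vtxs G L := by
  induction h with
  | nil => rfl
  | @cons e e' L L' he _ ih =>
    ext v
    rw [mem_vtxs_cons, mem_vtxs_cons, ih]
    rcases he with rfl | rfl
    · rfl
    · rw [eflip_support, List.mem_reverse]

lemma reo_eset {L L' : List (Ear G)} (h : Reo L L') : eset G L' = eset G L := by
  induction h with
  | nil => rfl
  | @cons e e' L L' he _ ih =>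
    ext s
    rw [mem_eset_cons, mem_eset_cons, ih]
    rcases he with rfl | rfl
    · rfl
    · rw [eflip_edges, List.mem_reverse]

lemma eflip_isTrail {e : Ear G} (h : e.2.2.IsTrail) : (eflip e).2.2.IsTrail :=
  Walk.IsTrail.reverse _ h

lemma eflip_not_nil {e : Ear G} (h : ¬ e.2.2.Nil) : ¬ (eflip e).2.2.Nil := by
  rw [Walk.nil_iff_length_eq] at h ⊢
  show ¬ e.2.2.reverse.length = 0
  rwa [Walk.length_reverse]

lemma reo_good {L : List (Ear G)} (h : Good G L) :
    ∀ L', Reo L L' → Good G L' := by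
  induction h with
  | base e hc ht hn =>
    intro L' hreo
    cases hreo with
    | cons he htail =>
      cases htail
      rcases he with rfl | rfl
      · exact Good.base _ hc ht hn
      · exact Good.base _ hc.symm (eflip_isTrail ht) (eflip_not_nil hn)
  | cons e L hL ht hn hs hf hd ih =>
    intro L'' hreo
    cases hreo with
    | @cons _ e' _ M' he hrest => ?_
    have hM' : Good G M' := ih M' hrest
    have hv : vtxs G M' = vtxs G L := reo_vtxs hrest
    have hes : eset G M' = eset G L := reo_eset hrest
    rcases he with rfl | rfl
    · exact Good.cons _ _ hM' ht hn (hv ▸ hs) (hv ▸ hf) (fun s hsm => hes ▸ hd s hsm)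
    · refine Good.cons _ _ hM' (eflip_isTrail ht) (eflip_not_nil hn) ?_ ?_ ?_
      · exact hv ▸ hf
      · exact hv ▸ hs
      · intro s hsm
        rw [eflip_edges, List.mem_reverse] at hsm
        exact hes ▸ hd s hsm

/-! ### Counting in- and out-darts -/

noncomputable section
open Classical

def INd (L : List (Ear G)) (v : V) : ℕ :=
  ((allDarts G L).filter (fun d => d.snd = v)).length

def OUTd (L : List (Ear G)) (v : V) : ℕ :=
  ((allDarts G L).filter (fun d => d.fst = v)).length

lemma walk_flow {u v : V} (w : G.Walk u v) (z : V) :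
    ((w.darts.filter (fun d => d.snd = z)).length : ℤ)
      - (w.darts.filter (fun d => d.fst = z)).length
    = (if v = z then 1 else 0) - (if u = z then 1 else 0) := by
  induction w with
  | nil => simp [Walk.darts_nil]
  | @cons u m v h p ih =>
    rw [Walk.darts_cons, List.filter_cons, List.filter_cons]
    have hsnd : (⟨(u, m), h⟩ : G.Dart).snd = m := rfl
    have hfst : (⟨(u, m), h⟩ : G.Dart).fst = u := rfl
    by_cases hm : m = z <;> by_cases hu : u = z <;> by_cases hv : v = z <;>
      simp only [hsnd, hfst, hm, hu, hv, eq_self_iff_true, decide_true, decide_false,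
        List.length_cons, if_true, if_false, ite_true, ite_false] at ih ⊢ <;>
      push_cast at ih ⊢ <;> omega

lemma flow_list (L : List (Ear G)) (z : V) :
    (INd L z : ℤ) - OUTd L z
      = (L.map (fun e => (if e.2.1 = z then (1:ℤ) else 0) - if e.1 = z then 1 else 0)).sum := by
  induction L with
  | nil => simp [INd, OUTd, allDarts]
  | cons e L ih =>
    have h1 : INd (e :: L) z
        = (e.2.2.darts.filter (fun d => d.snd = z)).length + INd L z := by
      rw [INd, INd, allDarts_cons, List.filter_append, List.length_append]
    have h2 : OUTd (e :: L) z
        = (e.2.2.darts.filter (fun d => d.fst = z)).length + OUTd L z := by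
      rw [OUTd, OUTd, allDarts_cons, List.filter_append, List.length_append]
    rw [h1, h2, List.map_cons, List.sum_cons, ← ih]
    have h3 := walk_flow e.2.2 z
    push_cast
    omega
    
lemma ncard_in (L : List (Ear G)) (hnd : (allDarts G L).Nodup) (v : V) :
    {u | DRel G L u v}.ncard = INd L v := by
  classical
  set lst : List V := ((allDarts G L).filter (fun d => d.snd = v)).map (fun d => d.fst)
    with hlst
  have hset : {u | DRel G L u v} = ↑lst.toFinset := by
    ext u
    simp only [Set.mem_setOf_eq, Finset.coe_sort_coe, Finset.mem_coe, List.mem_toFinset,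
      hlst, List.mem_map, List.mem_filter, decide_eq_true_eq, DRel]
    constructor
    · rintro ⟨d, hd, hprod⟩
      rw [Prod.ext_iff] at hprod
      exact ⟨d, ⟨hd, hprod.2⟩, hprod.1⟩
    · rintro ⟨d, ⟨hd, hsnd⟩, hfst⟩
      exact ⟨d, hd, Prod.ext hfst hsnd⟩
  have hnodup : lst.Nodup := by
    refine List.Nodup.map_on ?_ (hnd.filter _)
    intro d hd d' hd' hfst
    rw [List.mem_filter, decide_eq_true_eq] at hd hd'
    exact SimpleGraph.Dart.ext _ _ (Prod.ext hfst (hd.2.trans hd'.2.symm))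
  rw [hset, Set.ncard_coe_finset, List.card_toFinset, hnodup.dedup, hlst,
    List.length_map]
  rfl

lemma ncard_out (L : List (Ear G)) (hnd : (allDarts G L).Nodup) (v : V) :
    {u | DRel G L v u}.ncard = OUTd L v := by
  classical
  set lst : List V := ((allDarts G L).filter (fun d => d.fst = v)).map (fun d => d.snd)
    with hlst
  have hset : {u | DRel G L v u} = ↑lst.toFinset := by
    ext u
    simp only [Set.mem_setOf_eq, Finset.coe_sort_coe, Finset.mem_coe, List.mem_toFinset,
      hlst, List.mem_map, List.mem_filter, decide_eq_true_eq, DRel]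
    constructor
    · rintro ⟨d, hd, hprod⟩
      rw [Prod.ext_iff] at hprod
      exact ⟨d, ⟨hd, hprod.1⟩, hprod.2⟩
    · rintro ⟨d, ⟨hd, hfst⟩, hsnd⟩
      exact ⟨d, hd, Prod.ext hfst hsnd⟩
  have hnodup : lst.Nodup := by
    refine List.Nodup.map_on ?_ (hnd.filter _)
    intro d hd d' hd' hsnd
    rw [List.mem_filter, decide_eq_true_eq] at hd hd'
    exact SimpleGraph.Dart.ext _ _ (Prod.ext (hd.2.trans hd'.2.symm) hsnd)
  rw [hset, Set.ncard_coe_finset, List.card_toFinset, hnodup.dedup, hlst,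
    List.length_map]
  rfl

/-! ### Orientation properties -/

lemma drel_adj {L : List (Ear G)} {a b : V} (h : DRel G L a b) : G.Adj a b := by
  obtain ⟨d, _, hprod⟩ := h
  have := d.adj
  rw [show d.fst = (d.toProd).1 from rfl, show d.snd = (d.toProd).2 from rfl, hprod] at this
  exact this

lemma dart_exists {L : List (Ear G)} (hcov : eset G L = G.edgeSet) {a b : V}
    (hab : G.Adj a b) : DRel G L a b ∨ DRel G L b a := by
  have hmem : s(a, b) ∈ eset G L := by rw [hcov]; exact G.mem_edgeSet.mpr hab
  rw [mem_eset_iff_mem_flatMap, ← map_edge_allDarts, List.mem_map] at hmem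
  obtain ⟨d, hd, hedge⟩ := hmem
  rcases (SimpleGraph.dart_edge_eq_mk'_iff).mp hedge with h | h
  · exact Or.inl ⟨d, hd, h⟩
  · exact Or.inr ⟨d, hd, h⟩

lemma not_both {L : List (Ear G)} (hgood : Good G L) {a b : V}
    (h1 : DRel G L a b) (h2 : DRel G L b a) : False := by
  have hne : a ≠ b := (drel_adj h1).ne
  obtain ⟨d, hd, hprod⟩ := h1
  obtain ⟨d', hd', hprod'⟩ := h2
  have hedge : d.edge = d'.edge := by
    unfold SimpleGraph.Dart.edge
    rw [show d.fst = a from congrArg Prod.fst hprod, show d.snd = b from congrArg Prod.snd hprod,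
      show d'.fst = b from congrArg Prod.fst hprod', show d'.snd = a from congrArg Prod.snd hprod']
    exact Sym2.eq_swap
  have := good_dart_unique hgood hd hd' hedge
  rw [this, hprod'] at hprod
  exact hne (congrArg Prod.snd hprod)

lemma deg_eq [Fintype V] [DecidableRel G.Adj] {L : List (Ear G)} (hgood : Good G L)
    (hcov : eset G L = G.edgeSet) (v : V) :
    G.degree v = OUTd L v + INd L v := by
  have hsplit : {u | G.Adj v u} = {u | DRel G L v u} ∪ {u | DRel G L u v} := by
    ext u
    simp only [Set.mem_setOf_eq, Set.mem_union]
    constructor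
    · intro h; exact dart_exists hcov h
    · rintro (h | h)
      · exact drel_adj h
      · exact (drel_adj h).symm
  have hdisj : Disjoint {u | DRel G L v u} {u | DRel G L u v} := by
    rw [Set.disjoint_left]
    intro u h1 h2
    exact not_both hgood h1 h2
  have hdeg : G.degree v = ({u | G.Adj v u}).ncard := by
    rw [SimpleGraph.degree, SimpleGraph.neighborFinset_def]
    rw [Set.ncard_eq_toFinset_card']
    rfl
  rw [hdeg, hsplit,
    Set.ncard_union_eq hdisj (Set.toFinite _) (Set.toFinite _),
    ncard_out L (good_darts_nodup hgood) v, ncard_in L (good_darts_nodup hgood) v]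

end

end BalOrient

/-- Every 2-edge-connected finite simple graph `G` admits a strongly connected
orientation `D` such that every vertex `v` satisfies
`indeg_D(v) ≤ outdeg_D(v) + 1` if `deg_G(v)` is odd, and
`indeg_D(v) ≤ outdeg_D(v)` if `deg_G(v)` is even. -/
theorem strongly_connected_balanced_orientation {V : Type*} [Fintype V]
    (G : SimpleGraph V) [DecidableRel G.Adj] (hG : TwoEdgeConnected G) :
    ∃ D : V → V → Prop, IsOrientation G D ∧
      (∀ x y : V, Relation.ReflTransGen D x y) ∧
      ∀ v : V,
        (Odd (G.degree v) → inDeg D v ≤ outDeg D v + 1) ∧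
        (Even (G.degree v) → inDeg D v ≤ outDeg D v) := by
  classical
  open BalOrient in
  obtain ⟨L, hgood, hcov, hvtx⟩ :=
    BalOrient.exists_cover (G := G) ⟨hG.1, hG.2.1, hG.2.2⟩
  set n := L.length with hn
  set p : Fin n → V × V := fun i => ((L.get i).1, (L.get i).2.1) with hp
  obtain ⟨q, hqor, hqbound⟩ := BalOrient.exists_balanced_orientation p
  set f : Fin n → BalOrient.Ear G := fun i =>
    if q i = p i then L.get i else BalOrient.eflip (L.get i) with hf
  set L' : List (BalOrient.Ear G) := List.ofFn f with hL'
  have hlen : L.length = L'.length := by simp [hL', hn]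
  have hreo : BalOrient.Reo L L' := by
    rw [BalOrient.Reo, List.forall₂_iff_get]
    refine ⟨hlen, ?_⟩
    intro i h1 h2
    have hgi : L'.get ⟨i, h2⟩ = f ⟨i, h1⟩ := List.get_ofFn f _
    rw [hgi]
    simp only [hf]
    split_ifs with hqi
    · left; rfl
    · right; rfl
  have hgood' : BalOrient.Good G L' := BalOrient.reo_good hgood L' hreo
  have hcov' : BalOrient.eset G L' = G.edgeSet := (BalOrient.reo_eset hreo).trans hcov
  have hvtx' : BalOrient.vtxs G L' = Set.univ := (BalOrient.reo_vtxs hreo).trans hvtx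
  -- flow computation
  have hterm : ∀ (z : V) (i : Fin n),
      ((if (f i).2.1 = z then (1:ℤ) else 0) - if (f i).1 = z then 1 else 0)
        = BalOrient.hexc (q i) z := by
    intro z i
    by_cases hq2 : q i = p i
    · have hfi : f i = L.get i := by simp only [hf]; rw [if_pos hq2]
      rw [hfi, hq2]
      rfl
    · have hqi : q i = (p i).swap := (hqor i).resolve_left hq2
      have hfi : f i = BalOrient.eflip (L.get i) := by simp only [hf]; rw [if_neg hq2]
      rw [hfi, hqi]
      rfl
  have hflow : ∀ z, ((BalOrient.INd L' z : ℤ) - BalOrient.OUTd L' z)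
      = BalOrient.Exc q z := by
    intro z
    rw [BalOrient.flow_list, hL', List.map_ofFn, List.sum_ofFn, BalOrient.Exc]
    exact Finset.sum_congr rfl fun i _ => hterm z i
  have hdeg : ∀ v, G.degree v = BalOrient.OUTd L' v + BalOrient.INd L' v :=
    BalOrient.deg_eq hgood' hcov'
  have hnd := BalOrient.good_darts_nodup hgood'
  refine ⟨BalOrient.DRel G L', ⟨fun u v h => BalOrient.drel_adj h, ?_⟩, ?_, ?_⟩
  · intro u v huv
    constructor
    · intro h1 h2
      exact BalOrient.not_both hgood' h1 h2
    · intro h2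
      exact (BalOrient.dart_exists hcov' huv).resolve_right h2
  · intro x y
    exact BalOrient.good_strong hgood' x (by rw [hvtx']; trivial) y (by rw [hvtx']; trivial)
  · intro v
    have hin : inDeg (BalOrient.DRel G L') v = BalOrient.INd L' v :=
      BalOrient.ncard_in L' hnd v
    have hout : outDeg (BalOrient.DRel G L') v = BalOrient.OUTd L' v :=
      BalOrient.ncard_out L' hnd v
    have hb := hqbound v
    have hfl := hflow v
    have hd := hdeg v
    constructor
    · intro _
      rw [hin, hout]
      have := hb.1
      omega
    · intro heven
      have heven' : Even (BalOrient.Deg p v) := by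
        have e2 : (BalOrient.Deg q v - BalOrient.Exc q v) % 2 = 0 :=
          Int.even_iff.mp (BalOrient.even_deg_sub_exc q v)
        have e3 : BalOrient.Deg q v = BalOrient.Deg p v :=
          BalOrient.deg_invariant p q hqor v
        have e1 : (G.degree v) % 2 = 0 := Nat.even_iff.mp heven
        rw [← e3, Int.even_iff]
        omega
      have := hb.2 heven'
      rw [hin, hout]
      omega
end

section
/- Let L = ((u_1, v_1), …, (u_l, v_l)) be an edge DFS of a finite simple graph G. For each vertex v of G, there is at most one index i ∈ {1, …, l−1} such that v_i = v and u_{i+1} ≠ v_i (i.e., L backtracks from each vertex at most once). -/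
/-- `Xset G L j w` is the set of edges of `G` incident to `w` that are not
among the edges of the first `j + 1` items of `L` (0-based: items `0, …, j`). -/
def Xset {V : Type*} (G : SimpleGraph V) (L : List (V × V)) (j : ℕ) (w : V) :
    Set (Sym2 V) :=
  {e | e ∈ G.edgeSet ∧ w ∈ e ∧
    ∀ i : ℕ, ∀ hi : i < L.length, i ≤ j → e ≠ Sym2.mk (L[i]'hi).1 (L[i]'hi).2}

/-- `L = ((u_0, v_0), …, (u_{l-1}, v_{l-1}))` is an edge DFS of `G`:
(i) each `{u_j, v_j}` is an edge of `G`;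
(ii) every edge of `G` occurs as some `{u_j, v_j}`;
(iii) after traversing items `0, …, j`, if some edge incident to `v_j` is still
untraversed then the next item traverses such an edge starting at `v_j`;
otherwise `L` backtracks to the last previously visited vertex `v_{j'}` that
still has an untraversed incident edge and traverses such an edge from it. -/
def IsEdgeDFS {V : Type*} (G : SimpleGraph V) (L : List (V × V)) : Prop :=
  (∀ i : ℕ, ∀ hi : i < L.length, G.Adj (L[i]'hi).1 (L[i]'hi).2) ∧
  (∀ e ∈ G.edgeSet, ∃ i : ℕ, ∃ hi : i < L.length, e = Sym2.mk (L[i]'hi).1 (L[i]'hi).2) ∧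
  (∀ j : ℕ, ∀ hj : j + 1 < L.length,
    (Xset G L j (L[j]'(by omega)).2 ≠ ∅ →
      (L[j + 1]'hj).1 = (L[j]'(by omega)).2 ∧
      Sym2.mk (L[j + 1]'hj).1 (L[j + 1]'hj).2 ∈ Xset G L j (L[j]'(by omega)).2) ∧
    (Xset G L j (L[j]'(by omega)).2 = ∅ →
      ∃ j' : ℕ, ∃ hj' : j' < j,
        Xset G L j (L[j']'(by omega)).2 ≠ ∅ ∧
        (∀ j'' : ℕ, ∀ _h1 : j' < j'', ∀ _h2 : j'' < j,
          Xset G L j (L[j'']'(by omega)).2 = ∅) ∧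
        (L[j + 1]'hj).1 = (L[j']'(by omega)).2 ∧
        Sym2.mk (L[j + 1]'hj).1 (L[j + 1]'hj).2 ∈ Xset G L j (L[j']'(by omega)).2))

lemma edgeDFS_key {V : Type*} (G : SimpleGraph V) (L : List (V × V))
    (hL : IsEdgeDFS G L) (v : V) (i j : ℕ) (hij : i < j)
    (hi : i + 1 < L.length) (hj : j + 1 < L.length)
    (hvi : (L[i]'(Nat.lt_of_succ_lt hi)).2 = v)
    (hbi : (L[i + 1]'hi).1 ≠ (L[i]'(Nat.lt_of_succ_lt hi)).2)
    (hvj : (L[j]'(Nat.lt_of_succ_lt hj)).2 = v) : False := by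
  obtain ⟨k, rfl⟩ : ∃ k, j = k + 1 := ⟨j - 1, by omega⟩
  have hk : k + 1 < L.length := by omega
  -- Xset at step i for v is empty, else we'd not backtrack
  have hXi : Xset G L i v = ∅ := by
    rw [← hvi]
    by_contra h
    exact hbi ((hL.2.2 i hi).1 h).1
  -- the edge at index k+1 is in some Xset at step k
  have hmem : ∃ w, Sym2.mk (L[k + 1]'hk).1 (L[k + 1]'hk).2 ∈ Xset G L k w := by
    by_cases h : Xset G L k ((L[k]'(by omega)).2) = ∅
    · obtain ⟨j', hj', _, _, _, hm⟩ := (hL.2.2 k hk).2 h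
      exact ⟨_, hm⟩
    · exact ⟨_, ((hL.2.2 k hk).1 h).2⟩
  obtain ⟨w, hw⟩ := hmem
  obtain ⟨hE, -, hne⟩ := hw
  -- then this edge belongs to Xset G L i v, contradiction
  have : Sym2.mk (L[k + 1]'hk).1 (L[k + 1]'hk).2 ∈ Xset G L i v := by
    refine ⟨hE, ?_, fun i' hi' hle => hne i' hi' (by omega)⟩
    rw [← hvj]
    have : Sym2.mk (L[k + 1]'hk).1 (L[k + 1]'hk).2 = s((L[k + 1]'hk).1, (L[k + 1]'hk).2) := rfl
    rw [this, Sym2.mem_iff]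
    exact Or.inr rfl
  rw [hXi] at this
  exact this

/-- An edge DFS `L` backtracks from each vertex at most once: for each vertex
`v` there is at most one index `i` with `v_i = v` and `u_{i+1} ≠ v_i`. -/
theorem edgeDFS_backtracks_at_most_once {V : Type*} [Fintype V]
    (G : SimpleGraph V) (L : List (V × V)) (hL : IsEdgeDFS G L) (v : V) :
    ∀ i j : ℕ, ∀ hi : i + 1 < L.length, ∀ hj : j + 1 < L.length,
      (L[i]'(by omega)).2 = v → (L[i + 1]'hi).1 ≠ (L[i]'(by omega)).2 →
      (L[j]'(by omega)).2 = v → (L[j + 1]'hj).1 ≠ (L[j]'(by omega)).2 →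
      i = j := by
  intro i j hi hj hvi hbi hvj hbj
  rcases lt_trichotomy i j with h | h | h
  · exact absurd (edgeDFS_key G L hL v i j h hi hj hvi hbi hvj) not_false
  · exact h
  · exact absurd (edgeDFS_key G L hL v j i h hj hi hvj hbj hvi) not_false
end

section
/- Let L = ((u_1, v_1), …, (u_l, v_l)) be an edge DFS of a finite simple graph G, and let u be any vertex visited by L. Then |in_L(u)| ≤ |out_L(u)| + 1 if deg_G(u) is odd, and |in_L(u)| ≤ |out_L(u)| if deg_G(u) is even. -/
/-- `inE L u` is the set of edges of `L` whose ordered pair ends at `u`. -/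
def inE {V : Type*} (L : List (V × V)) (u : V) : Set (Sym2 V) :=
  {e | ∃ p ∈ L, p.2 = u ∧ e = Sym2.mk p.1 p.2}

/-- `outE L u` is the set of edges of `L` whose ordered pair starts at `u`. -/
def outE {V : Type*} (L : List (V × V)) (u : V) : Set (Sym2 V) :=
  {e | ∃ p ∈ L, p.1 = u ∧ e = Sym2.mk p.1 p.2}


section EdgeDFSAux

variable {V : Type*} {G : SimpleGraph V} {L : List (V × V)}

/-- Edges of an edge DFS are pairwise distinct. -/
theorem edgeDFS_edges_ne (hL : IsEdgeDFS G L) {i j : ℕ} (hij : i < j) (hj : j < L.length) :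
    Sym2.mk (L[i]'(by omega)).1 (L[i]'(by omega)).2 ≠ Sym2.mk (L[j]'hj).1 (L[j]'hj).2 := by
  obtain ⟨k, rfl⟩ : ∃ k, j = k + 1 := ⟨j - 1, by omega⟩
  have h3 := hL.2.2 k hj
  by_cases hx : Xset G L k (L[k]'(by omega)).2 = ∅
  · obtain ⟨j', hj', -, -, -, hmem⟩ := h3.2 hx
    exact (hmem.2.2 i (by omega) (by omega)).symm
  · exact ((h3.1 hx).2.2.2 i (by omega) (by omega)).symm

end EdgeDFSAux

/-- For any edge DFS `L` of `G` and any vertex `u` visited by `L`, we have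
`|in_L(u)| ≤ |out_L(u)| + 1` if `deg_G(u)` is odd, and
`|in_L(u)| ≤ |out_L(u)|` if `deg_G(u)` is even. -/
theorem edgeDFS_balanced {V : Type*} [Fintype V]
    (G : SimpleGraph V) [DecidableRel G.Adj] (L : List (V × V))
    (hL : IsEdgeDFS G L) (u : V) (hu : ∃ p ∈ L, u = p.1 ∨ u = p.2) :
    (Odd (G.degree u) → (inE L u).ncard ≤ (outE L u).ncard + 1) ∧
    (Even (G.degree u) → (inE L u).ncard ≤ (outE L u).ncard) := by
  classical
  have l := L.length
  -- position sets
  set Tin : Finset (Fin L.length) := Finset.univ.filter (fun i => (L.get i).2 = u) with hTin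
  set Tout : Finset (Fin L.length) := Finset.univ.filter (fun i => (L.get i).1 = u) with hTout
  have hne : ∀ {i j : Fin L.length}, i ≠ j →
      Sym2.mk (L.get i).1 (L.get i).2 ≠ Sym2.mk (L.get j).1 (L.get j).2 := by
    intro i j hij
    rcases lt_or_gt_of_ne (fun h => hij (Fin.ext h) : (i : ℕ) ≠ (j : ℕ)) with h | h
    · exact edgeDFS_edges_ne hL h j.isLt
    · exact (edgeDFS_edges_ne hL h i.isLt).symm
  have hInjOn : ∀ (s : Finset (Fin L.length)),
      Set.InjOn (fun i : Fin L.length => Sym2.mk (L.get i).1 (L.get i).2) s := by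
    intro s i _ j _ hsame
    by_contra hij
    exact hne hij hsame
  -- inE and outE as images
  have hin_eq : inE L u = ↑(Tin.image (fun i => Sym2.mk (L.get i).1 (L.get i).2)) := by
    ext e
    simp only [inE, Set.mem_setOf_eq, Finset.coe_image, Set.mem_image, Finset.mem_coe,
      hTin, Finset.mem_filter, Finset.mem_univ, true_and]
    constructor
    · rintro ⟨p, hp, hp2, rfl⟩
      obtain ⟨i, rfl⟩ := List.mem_iff_get.mp hp
      exact ⟨i, hp2, rfl⟩
    · rintro ⟨i, hi, rfl⟩
      exact ⟨L.get i, List.get_mem L i, hi, rfl⟩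
  have hout_eq : outE L u = ↑(Tout.image (fun i => Sym2.mk (L.get i).1 (L.get i).2)) := by
    ext e
    simp only [outE, Set.mem_setOf_eq, Finset.coe_image, Set.mem_image, Finset.mem_coe,
      hTout, Finset.mem_filter, Finset.mem_univ, true_and]
    constructor
    · rintro ⟨p, hp, hp1, rfl⟩
      obtain ⟨i, rfl⟩ := List.mem_iff_get.mp hp
      exact ⟨i, hp1, rfl⟩
    · rintro ⟨i, hi, rfl⟩
      exact ⟨L.get i, List.get_mem L i, hi, rfl⟩
  have hin_card : (inE L u).ncard = Tin.card := by
    rw [hin_eq, Set.ncard_coe_finset, Finset.card_image_of_injOn (hInjOn Tin)]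
  have hout_card : (outE L u).ncard = Tout.card := by
    rw [hout_eq, Set.ncard_coe_finset, Finset.card_image_of_injOn (hInjOn Tout)]
  -- key inequality: Tin.card ≤ Tout.card + 1
  have Good : Fin L.length → Prop := fun i => (i : ℕ) + 1 < L.length ∧ Xset G L i u ≠ ∅
  have key : Tin.card ≤ Tout.card + 1 := by
    set good : Fin L.length → Prop := fun i => (i : ℕ) + 1 < L.length ∧ Xset G L i u ≠ ∅
      with hgood
    have hmap : ∀ i ∈ Tin.filter good, ∀ (h : (i : ℕ) + 1 < L.length),
        (⟨(i : ℕ) + 1, h⟩ : Fin L.length) ∈ Tout := by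
      intro i hi h
      simp only [Finset.mem_filter, hTin, Finset.mem_univ, true_and, hgood] at hi
      obtain ⟨hi2, -, hx⟩ := hi
      have h1 := (hL.2.2 i h).1
      rw [List.get_eq_getElem] at hi2
      rw [hi2] at h1
      have := (h1 hx).1
      simp only [hTout, Finset.mem_filter, Finset.mem_univ, true_and, List.get_eq_getElem]
      exact this
    -- at most one bad entry
    have hbadlt : ∀ i ∈ Tin.filter (fun i => ¬ good i), ∀ j ∈ Tin.filter (fun i => ¬ good i),
        (i : ℕ) < (j : ℕ) → False := by
      intro i hi j hj hlt
      simp only [Finset.mem_filter, hTin, Finset.mem_univ, true_and, hgood,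
        not_and, not_not, List.get_eq_getElem] at hi hj
      have hi1 : (i : ℕ) + 1 < L.length := by have := j.isLt; omega
      have hxe : Xset G L i u = ∅ := hi.2 hi1
      -- but edge at j is incident to u and not among the first i+1 edges
      have hmem : Sym2.mk (L[(j : ℕ)]'j.isLt).1 (L[(j : ℕ)]'j.isLt).2 ∈ Xset G L i u := by
        refine ⟨G.mem_edgeSet.mpr (hL.1 j j.isLt), ?_, ?_⟩
        · rw [Sym2.mem_iff]
          right
          exact hj.1.symm
        · intro k hk hki
          exact (edgeDFS_edges_ne hL (by omega) j.isLt).symm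
      rw [hxe] at hmem
      exact hmem
    have hbad : ∀ i ∈ Tin.filter (fun i => ¬ good i), ∀ j ∈ Tin.filter (fun i => ¬ good i),
        i = j := by
      intro i hi j hj
      rcases lt_trichotomy (i : ℕ) (j : ℕ) with h | h | h
      · exact absurd (hbadlt i hi j hj h) (by simp)
      · exact Fin.ext h
      · exact absurd (hbadlt j hj i hi h) (by simp)
    have hb1 : (Tin.filter (fun i => ¬ good i)).card ≤ 1 :=
      Finset.card_le_one.mpr hbad
    have hg : (Tin.filter good).card ≤ Tout.card := by
      classical
      refine Finset.card_le_card_of_injOn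
        (fun i => if h : (i : ℕ) + 1 < L.length then ⟨(i : ℕ) + 1, h⟩ else i) ?_ ?_
      · intro i hi
        have h : (i : ℕ) + 1 < L.length := (Finset.mem_filter.mp hi).2.1
        simp only [dif_pos h]
        exact hmap i hi h
      · intro i hi j hj hfij
        have h1 : (i : ℕ) + 1 < L.length := (Finset.mem_filter.mp hi).2.1
        have h2 : (j : ℕ) + 1 < L.length := (Finset.mem_filter.mp hj).2.1
        simp only [dif_pos h1, dif_pos h2] at hfij
        have : (i : ℕ) + 1 = (j : ℕ) + 1 := congrArg Fin.val hfij
        exact Fin.ext (by omega)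
    calc Tin.card = (Tin.filter good).card + (Tin.filter (fun i => ¬ good i)).card :=
          (Finset.card_filter_add_card_filter_not _).symm
      _ ≤ Tout.card + 1 := by omega
  -- degree count
  have hdisj : Disjoint (inE L u) (outE L u) := by
    rw [Set.disjoint_left, hin_eq, hout_eq]
    intro e he1 he2
    simp only [Finset.coe_image, Set.mem_image, Finset.mem_coe, hTin, hTout,
      Finset.mem_filter, Finset.mem_univ, true_and] at he1 he2
    obtain ⟨i, hi2, rfl⟩ := he1
    obtain ⟨j, hj1, hsame⟩ := he2
    by_cases hij : j = i
    · subst hij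
      have := hL.1 j j.isLt
      rw [← List.get_eq_getElem] at this
      rw [hi2, hj1] at this
      exact G.irrefl this
    · exact hne hij hsame
  have huni : inE L u ∪ outE L u = G.incidenceSet u := by
    ext e
    constructor
    · rintro (⟨p, hp, hp2, rfl⟩ | ⟨p, hp, hp1, rfl⟩) <;>
        obtain ⟨i, rfl⟩ := List.mem_iff_get.mp hp
      · refine ⟨G.mem_edgeSet.mpr (hL.1 i i.isLt), ?_⟩
        rw [Sym2.mem_iff]; right; rw [List.get_eq_getElem] at hp2; exact hp2.symm
      · refine ⟨G.mem_edgeSet.mpr (hL.1 i i.isLt), ?_⟩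
        rw [Sym2.mem_iff]; left; rw [List.get_eq_getElem] at hp1; exact hp1.symm
    · rintro ⟨he, hue⟩
      obtain ⟨i, hi, rfl⟩ := hL.2.1 e he
      rw [Sym2.mem_iff] at hue
      rcases hue with h | h
      · right; exact ⟨L[i], List.getElem_mem hi, h.symm, rfl⟩
      · left; exact ⟨L[i], List.getElem_mem hi, h.symm, rfl⟩
  have hdeg : (inE L u).ncard + (outE L u).ncard = G.degree u := by
    rw [← Set.ncard_union_eq hdisj (Set.toFinite _) (Set.toFinite _), huni]
    rw [Set.ncard_eq_toFinset_card']
    rw [Set.toFinset_card]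
    exact G.card_incidenceSet_eq_degree u
  rw [hin_card, hout_card] at hdeg ⊢
  constructor
  · intro _
    exact key
  · rintro ⟨m, hm⟩
    omega
end
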